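/- Let i ∈ N be a buyer and ξ ∈ ℝ_{≥0}^{E_i}. Then ξ belongs to the clinching polytope P^i_{w,d} (i.e., P^i_{w,d}(ξ) = P^i_{w,d}(0)) if and only if for every F ⊆ E_i and every X ⊆ N−i it holds that ξ(F) ≤ f_{w,d}(E_X ∪ F) − f_{w,d}(E_X). -/

import Mathlib

/-!
The inclusion `P^i_{w,d}(ξ) ⊆ P^i_{w,d}(0)` always holds (zero out buyer `i`'s edges), so `ξ` is
clinched iff `P^i_{w,d}(0) ⊆ P^i_{w,d}(ξ)`.

If so, every `x ∈ P_{w,d}` can be changed so that buyer `i` receives `ξ` while every other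
buyer keeps its load; this gives `x(E_X) + ξ(F) ≤ f_{w,d}(E_X ∪ F)`, and taking the supremum over
`x` gives the inequalities.

Conversely, `w + x ∈ P` exactly when `x` lies in the polymatroid of the monotone submodular
function `f_w`. Realising a load vector `u` of the other buyers together with `ξ` is therefore a
polymatroid problem with prescribed sums on the disjoint parts `{e}` (`e ∈ E_i`) and `E_k`
(`k ≠ i`). Such a point exists as soon as no union of parts is asked for more than `f_w` offers on
it: serve one part inside the residual left by the others, contract `f_w`, and recurse. Since
`u(Y) ≤ f_{w,d}(E_Y)`, the inequalities give exactly this condition.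
-/

open Finset

noncomputable section

namespace TwoSidedMarket

variable {B S : Type*} [Fintype B] [Fintype S] [DecidableEq B] [DecidableEq S]

/-- A function `f` on subsets of a ground set `G` is monotone submodular:
`f ∅ = 0`, monotone on subsets of `G`, and submodular on subsets of `G`. -/
def IsMonoSubmodular {α : Type*} [DecidableEq α] (G : Finset α) (f : Finset α → ℝ) : Prop :=
  f ∅ = 0 ∧ (∀ A B : Finset α, A ⊆ B → B ⊆ G → f A ≤ f B) ∧
    ∀ A B : Finset α, A ⊆ G → B ⊆ G → f (A ∩ B) + f (A ∪ B) ≤ f A + f B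

/-- Monotone submodular, without the requirement of vanishing at `∅`. -/
def IsMonoSubmodularWeak {α : Type*} [DecidableEq α] (G : Finset α) (f : Finset α → ℝ) : Prop :=
  (∀ A B : Finset α, A ⊆ B → B ⊆ G → f A ≤ f B) ∧
    ∀ A B : Finset α, A ⊆ G → B ⊆ G → f (A ∩ B) + f (A ∪ B) ≤ f A + f B

/-- `E_i`: the edges of `E` incident to buyer `i`. -/
def Ei (E : Finset (B × S)) (i : B) : Finset (B × S) := E.filter fun e => e.1 = i

/-- `E_j`: the edges of `E` incident to seller `j`. -/
def Ej (E : Finset (B × S)) (j : S) : Finset (B × S) := E.filter fun e => e.2 = j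

/-- `E_X`: the edges of `E` incident to some buyer in `X`. -/
def EX (E : Finset (B × S)) (X : Finset B) : Finset (B × S) := E.filter fun e => e.1 ∈ X

/-- `N_F`: the buyers incident to some edge of `F`. -/
def NF (F : Finset (B × S)) : Finset B := F.image Prod.fst

/-- `x(F) = Σ_{e ∈ F} x e`. -/
def vsum (x : B × S → ℝ) (F : Finset (B × S)) : ℝ := ∑ e ∈ F, x e

/-- Membership `w ∈ P = ⊕_j P_j`: `w` is nonnegative, supported on `E`, and
`w|_{E_j} ∈ P_j` for every seller `j`. -/
def memP (E : Finset (B × S)) (fj : S → Finset (B × S) → ℝ) (w : B × S → ℝ) : Prop :=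
  (∀ e, 0 ≤ w e) ∧ (∀ e ∉ E, w e = 0) ∧ ∀ j : S, ∀ F ⊆ Ej E j, vsum w F ≤ fj j F

/-- `f(F) := Σ_{j ∈ M} f_j (E_j ∩ F)`. -/
def fTot (E : Finset (B × S)) (fj : S → Finset (B × S) → ℝ) (F : Finset (B × S)) : ℝ :=
  ∑ j : S, fj j (Ej E j ∩ F)

/-- `f_w(F) := min_{F ⊆ F' ⊆ E} (f(F') - w(F'))`. -/
def fw (E : Finset (B × S)) (fj : S → Finset (B × S) → ℝ)
    (w : B × S → ℝ) (F : Finset (B × S)) : ℝ :=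
  sInf {r : ℝ | ∃ F' : Finset (B × S), F ⊆ F' ∧ F' ⊆ E ∧ r = fTot E fj F' - vsum w F'}

/-- Membership in the remnant supply polytope `P_{w,d}`. -/
def memPwd (E : Finset (B × S)) (fj : S → Finset (B × S) → ℝ)
    (w : B × S → ℝ) (d : B → ℝ) (x : B × S → ℝ) : Prop :=
  (∀ e, 0 ≤ x e) ∧ (∀ e ∉ E, x e = 0) ∧ memP E fj (w + x) ∧
    ∀ i : B, vsum x (Ei E i) ≤ d i

/-- `f_{w,d}(F) := max_{x ∈ P_{w,d}} x(F)`. -/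
def fwd (E : Finset (B × S)) (fj : S → Finset (B × S) → ℝ)
    (w : B × S → ℝ) (d : B → ℝ) (F : Finset (B × S)) : ℝ :=
  sSup {r : ℝ | ∃ x : B × S → ℝ, memPwd E fj w d x ∧ r = vsum x F}

/-- `P^i_{w,d}(ξ)`: the remnant supply polytope of the buyers other than `i`,
given that buyer `i` receives `ξ`.  (Vectors indexed by `N - i` are encoded as
functions on all of `B` vanishing at `i`.) -/
def PiWd (E : Finset (B × S)) (fj : S → Finset (B × S) → ℝ)
    (w : B × S → ℝ) (d : B → ℝ) (i : B) (ξ : B × S → ℝ) : Set (B → ℝ) :=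
  {u | u i = 0 ∧ (∀ k, 0 ≤ u k) ∧
    ∃ x : B × S → ℝ, memPwd E fj w d x ∧ (∀ e ∈ Ei E i, x e = ξ e) ∧
      ∀ k : B, k ≠ i → vsum x (Ei E k) = u k}

/-- The clinching polytope `P^i_{w,d}` of buyer `i`:
all `ξ ∈ ℝ_{≥0}^{E_i}` with `P^i_{w,d}(ξ) = P^i_{w,d}(0)`. -/
def ClinchP (E : Finset (B × S)) (fj : S → Finset (B × S) → ℝ)
    (w : B × S → ℝ) (d : B → ℝ) (i : B) : Set (B × S → ℝ) :=
  {ξ | (∀ e, 0 ≤ ξ e) ∧ (∀ e ∉ Ei E i, ξ e = 0) ∧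
    PiWd E fj w d i ξ = PiWd E fj w d i 0}

section Polymatroid

variable {α : Type*}

/-- The polymatroid `P(f) ⊆ ℝ_{≥0}^Γ`, its points extended by zero outside `Γ`. -/
structure MemPolymatroid (Γ : Finset α) (f : Finset α → ℝ) (x : α → ℝ) : Prop where
  nonneg : ∀ a, 0 ≤ x a
  eq_zero_of_notMem : ∀ a ∉ Γ, x a = 0
  sum_le : ∀ G ⊆ Γ, ∑ a ∈ G, x a ≤ f G

lemma MemPolymatroid.smul {Γ : Finset α} {f : Finset α → ℝ} {x : α → ℝ}
    (hx : MemPolymatroid Γ f x) {c : ℝ} (hc0 : 0 ≤ c) (hc1 : c ≤ 1) :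
    MemPolymatroid Γ f (c • x) where
  nonneg a := mul_nonneg hc0 (hx.nonneg a)
  eq_zero_of_notMem a ha := by simp [hx.eq_zero_of_notMem a ha]
  sum_le G hG := by
    have hsum : 0 ≤ ∑ a ∈ G, x a := sum_nonneg fun a _ => hx.nonneg a
    calc ∑ a ∈ G, (c • x) a = c * ∑ a ∈ G, x a := by simp [mul_sum]
      _ ≤ ∑ a ∈ G, x a := mul_le_of_le_one_left hsum hc1
      _ ≤ f G := hx.sum_le G hG

variable [DecidableEq α]

namespace IsMonoSubmodular

variable {Γ : Finset α} {f : Finset α → ℝ}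

lemma mono (hf : IsMonoSubmodular Γ f) {G H : Finset α} (hGH : G ⊆ H) (hH : H ⊆ Γ) :
    f G ≤ f H :=
  hf.2.1 G H hGH hH

lemma submodular (hf : IsMonoSubmodular Γ f) {G H : Finset α} (hG : G ⊆ Γ) (hH : H ⊆ Γ) :
    f (G ∩ H) + f (G ∪ H) ≤ f G + f H :=
  hf.2.2 G H hG hH

lemma nonneg (hf : IsMonoSubmodular Γ f) {G : Finset α} (hG : G ⊆ Γ) : 0 ≤ f G :=
  hf.1 ▸ hf.mono (empty_subset G) hG

lemma of_subset (hf : IsMonoSubmodular Γ f) {Γ' : Finset α} (h : Γ' ⊆ Γ) :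
    IsMonoSubmodular Γ' f :=
  ⟨hf.1, fun _ _ hGH hH => hf.mono hGH (hH.trans h),
    fun _ _ hG hH => hf.submodular (hG.trans h) (hH.trans h)⟩

end IsMonoSubmodular

namespace MemPolymatroid

variable {Γ : Finset α} {f : Finset α → ℝ} {x : α → ℝ}

lemma sum_inter (hx : MemPolymatroid Γ f x) (G : Finset α) :
    ∑ a ∈ G ∩ Γ, x a = ∑ a ∈ G, x a :=
  sum_subset inter_subset_left fun a _ ha => hx.eq_zero_of_notMem a fun haΓ => ha (by simp_all)

lemma sum_eq_zero_of_disjoint (hx : MemPolymatroid Γ f x) {G : Finset α} (hG : Disjoint G Γ) :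
    ∑ a ∈ G, x a = 0 := by
  rw [← hx.sum_inter, disjoint_iff_inter_eq_empty.1 hG, sum_empty]

end MemPolymatroid

lemma IsMonoSubmodular.memPolymatroid_zero {Γ : Finset α} {f : Finset α → ℝ}
    (hf : IsMonoSubmodular Γ f) : MemPolymatroid Γ f 0 :=
  ⟨fun _ => le_rfl, fun _ _ => rfl, fun G hG => by simpa using hf.nonneg hG⟩

/-- The greedy algorithm: adding `a` to `Γ` raises the coordinate `a` by the marginal value
`f (insert a Γ) - f Γ`, which submodularity keeps feasible. -/
theorem IsMonoSubmodular.exists_memPolymatroid_sum_eq {Γ : Finset α} {f : Finset α → ℝ}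
    (hf : IsMonoSubmodular Γ f) : ∃ x, MemPolymatroid Γ f x ∧ ∑ a ∈ Γ, x a = f Γ := by
  induction Γ using Finset.induction_on with
  | empty => exact ⟨0, hf.memPolymatroid_zero, by simp [hf.1]⟩
  | insert a Γ ha ih =>
    obtain ⟨x, hx, hxΓ⟩ := ih (hf.of_subset (subset_insert a Γ))
    set δ := f (insert a Γ) - f Γ
    have hδ : 0 ≤ δ := sub_nonneg.2 (hf.mono (subset_insert a Γ) le_rfl)
    have hsum : ∀ G : Finset α, ∑ b ∈ G, (x + Pi.single a δ : α → ℝ) b =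
        ∑ b ∈ G, x b + if a ∈ G then δ else 0 := fun G => by
      simp only [Pi.add_apply, sum_add_distrib, sum_pi_single']
    refine ⟨x + Pi.single a δ, ⟨fun b => ?_, fun b hb => ?_, fun G hG => ?_⟩, ?_⟩
    · rcases eq_or_ne b a with rfl | hba
      · simpa using add_nonneg (hx.nonneg b) hδ
      · simpa [hba] using hx.nonneg b
    · have hba : b ≠ a := fun h => hb (h ▸ mem_insert_self a Γ)
      simp [hba, hx.eq_zero_of_notMem b fun h => hb (mem_insert_of_mem h)]
    · rw [hsum, ← hx.sum_inter]
      have hGΓ := hx.sum_le (G ∩ Γ) inter_subset_right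
      split_ifs with haG
      · have hunion : G ∪ Γ = insert a Γ := by
          refine le_antisymm (union_subset hG (subset_insert a Γ)) (insert_subset ?_ ?_)
          · exact mem_union_left Γ haG
          · exact subset_union_right
        have := hf.submodular hG (subset_insert a Γ)
        rw [hunion] at this
        linarith
      · have : G ∩ Γ = G := inter_eq_left.2 fun b hb =>
          (mem_insert.1 (hG hb)).resolve_left fun h => haG (h ▸ hb)
        rw [this] at hGΓ ⊢
        linarith
    · rw [hsum, if_pos (mem_insert_self a Γ), sum_insert ha, hx.eq_zero_of_notMem a ha, hxΓ]
      simp [δ]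

theorem IsMonoSubmodular.exists_memPolymatroid_sum_eq_of_le {Γ : Finset α}
    {f : Finset α → ℝ} (hf : IsMonoSubmodular Γ f) {c : ℝ} (hc0 : 0 ≤ c) (hc : c ≤ f Γ) :
    ∃ x, MemPolymatroid Γ f x ∧ ∑ a ∈ Γ, x a = c := by
  obtain ⟨x, hx, hxΓ⟩ := hf.exists_memPolymatroid_sum_eq
  rcases (hf.nonneg le_rfl).eq_or_lt with hfΓ | hfΓ
  · exact ⟨0, hf.memPolymatroid_zero, by simp; linarith⟩
  · refine ⟨(c / f Γ) • x, hx.smul (div_nonneg hc0 hfΓ.le) ((div_le_one hfΓ).2 hc), ?_⟩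
    simp [← mul_sum, hxΓ, hfΓ.ne']

end Polymatroid

section Residual

variable {α ι : Type*} [DecidableEq α]
  {f : Finset α → ℝ} {T : Finset ι} {A : ι → Finset α} {y : ι → ℝ}

/-- `residual f T A y F = min_{S ⊆ T} (f (F ∪ ⋃_{t ∈ S} A t) - y(S))`: what `f` can still
offer on `F` after the demand `y t` of each part `A t` has been served. -/
def residual (f : Finset α → ℝ) (T : Finset ι) (A : ι → Finset α) (y : ι → ℝ)
    (F : Finset α) : ℝ :=
  T.powerset.inf' ⟨∅, empty_mem_powerset T⟩ fun S => f (F ∪ S.biUnion A) - ∑ t ∈ S, y t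

lemma residual_le {S : Finset ι} (hS : S ⊆ T) (F : Finset α) :
    residual f T A y F ≤ f (F ∪ S.biUnion A) - ∑ t ∈ S, y t :=
  inf'_le _ (mem_powerset.2 hS)

lemma residual_le_self (F : Finset α) : residual f T A y F ≤ f F := by
  simpa using residual_le (f := f) (A := A) (y := y) (empty_subset T) F

lemma le_residual {F : Finset α} {c : ℝ}
    (h : ∀ S ⊆ T, c ≤ f (F ∪ S.biUnion A) - ∑ t ∈ S, y t) : c ≤ residual f T A y F :=
  le_inf' _ _ fun S hS => h S (mem_powerset.1 hS)

lemma exists_residual_eq (F : Finset α) :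
    ∃ S ⊆ T, residual f T A y F = f (F ∪ S.biUnion A) - ∑ t ∈ S, y t := by
  obtain ⟨S, hS, h⟩ := exists_mem_eq_inf' (⟨∅, empty_mem_powerset T⟩ : T.powerset.Nonempty)
    fun S => f (F ∪ S.biUnion A) - ∑ t ∈ S, y t
  exact ⟨S, mem_powerset.1 hS, h⟩

variable {E : Finset α}

lemma residual_mono (hf : IsMonoSubmodular E f) (hA : ∀ t ∈ T, A t ⊆ E)
    {F G : Finset α} (hFG : F ⊆ G) (hG : G ⊆ E) :
    residual f T A y F ≤ residual f T A y G := by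
  obtain ⟨S, hS, hmin⟩ := exists_residual_eq (f := f) (A := A) (y := y) (T := T) G
  rw [hmin]
  have := hf.mono (union_subset_union_left hFG (t := S.biUnion A))
    (union_subset hG (biUnion_subset.2 fun t ht => hA t (hS ht)))
  linarith [residual_le (f := f) (A := A) (y := y) hS F]

/-- The minimizers for `F` and `G` combine into candidates for `F ∩ G` and `F ∪ G`. -/
lemma residual_submodular [DecidableEq ι] (hf : IsMonoSubmodular E f) (hA : ∀ t ∈ T, A t ⊆ E)
    {F G : Finset α} (hF : F ⊆ E) (hG : G ⊆ E) :
    residual f T A y (F ∩ G) + residual f T A y (F ∪ G) ≤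
      residual f T A y F + residual f T A y G := by
  obtain ⟨SF, hSF, hFmin⟩ := exists_residual_eq (f := f) (A := A) (y := y) (T := T) F
  obtain ⟨SG, hSG, hGmin⟩ := exists_residual_eq (f := f) (A := A) (y := y) (T := T) G
  set U := F ∪ SF.biUnion A
  set V := G ∪ SG.biUnion A
  have hU : U ⊆ E := union_subset hF (biUnion_subset.2 fun t ht => hA t (hSF ht))
  have hV : V ⊆ E := union_subset hG (biUnion_subset.2 fun t ht => hA t (hSG ht))
  have hinter : F ∩ G ∪ (SF ∩ SG).biUnion A ⊆ U ∩ V := by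
    intro a
    simp only [mem_union, mem_inter, mem_biUnion, U, V]
    rintro (⟨haF, haG⟩ | ⟨t, ⟨htF, htG⟩, hat⟩)
    exacts [⟨.inl haF, .inl haG⟩, ⟨.inr ⟨t, htF, hat⟩, .inr ⟨t, htG, hat⟩⟩]
  have hunion : F ∪ G ∪ (SF ∪ SG).biUnion A = U ∪ V := by
    rw [union_biUnion, union_union_union_comm]
  have h₁ := residual_le (f := f) (A := A) (y := y)
    (inter_subset_left.trans hSF : SF ∩ SG ⊆ T) (F ∩ G)
  have h₂ := residual_le (f := f) (A := A) (y := y) (union_subset hSF hSG) (F ∪ G)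
  rw [hunion] at h₂
  have h₃ := hf.mono hinter (inter_subset_left.trans hU)
  have h₄ := hf.submodular hU hV
  have h₅ : ∑ t ∈ SF ∪ SG, y t + ∑ t ∈ SF ∩ SG, y t = ∑ t ∈ SF, y t + ∑ t ∈ SG, y t :=
    sum_union_inter
  rw [hFmin, hGmin]
  linarith

lemma residual_empty (hf : IsMonoSubmodular E f)
    (hcut : ∀ S ⊆ T, ∑ t ∈ S, y t ≤ f (S.biUnion A)) : residual f T A y ∅ = 0 := by
  refine le_antisymm (hf.1 ▸ residual_le_self ∅) (le_residual fun S hS => ?_)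
  simpa using hcut S hS

lemma IsMonoSubmodular.residual [DecidableEq ι] (hf : IsMonoSubmodular E f)
    (hA : ∀ t ∈ T, A t ⊆ E)
    (hcut : ∀ S ⊆ T, ∑ t ∈ S, y t ≤ f (S.biUnion A)) {Γ : Finset α} (hΓ : Γ ⊆ E) :
    IsMonoSubmodular Γ (residual f T A y) :=
  ⟨residual_empty hf hcut, fun _ _ hFG hG => residual_mono hf hA hFG (hG.trans hΓ),
    fun _ _ hF hG => residual_submodular hf hA (hF.trans hΓ) (hG.trans hΓ)⟩

end Residual

section Aggregation

variable {α ι : Type*} [DecidableEq α] {E Γ : Finset α} {f : Finset α → ℝ}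

lemma memPolymatroid_add_of_mem_residual (hΓ : Γ ⊆ E) {x₀ x₁ : α → ℝ}
    (hx₀ : ∀ a, 0 ≤ x₀ a) (hx₀Γ : ∀ a ∉ Γ, x₀ a = 0)
    (hx₁ : MemPolymatroid (E \ Γ) (residual f Γ singleton x₀) x₁) :
    MemPolymatroid E f (x₀ + x₁) where
  nonneg a := add_nonneg (hx₀ a) (hx₁.nonneg a)
  eq_zero_of_notMem a ha := by
    simp [hx₀Γ a fun h => ha (hΓ h), hx₁.eq_zero_of_notMem a fun h => ha (mem_sdiff.1 h).1]
  sum_le F hF := by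
    have hx₀F : ∑ a ∈ F ∩ Γ, x₀ a = ∑ a ∈ F, x₀ a :=
      sum_subset inter_subset_left fun a _ ha => hx₀Γ a fun h => ha (by simp_all)
    have hsplit : F ∩ (E \ Γ) ∪ F ∩ Γ = F := by
      rw [← inter_union_distrib_left, sdiff_union_of_subset hΓ, inter_eq_left.2 hF]
    have h₁ := hx₁.sum_le (F ∩ (E \ Γ)) inter_subset_right
    have h₂ := residual_le (f := f) (A := singleton) (y := x₀)
      (inter_subset_right : F ∩ Γ ⊆ Γ) (F ∩ (E \ Γ))
    rw [biUnion_singleton_eq_self, hsplit, hx₀F] at h₂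
    simp only [Pi.add_apply, sum_add_distrib, ← hx₁.sum_inter F]
    linarith

/-- Serve the part `A t₀` first, inside the residual left by the other parts; then contract `f`
by that allocation and serve the remaining parts by induction. -/
theorem exists_memPolymatroid_sum_parts_eq {ι : Type*} [DecidableEq ι]
    (hf : IsMonoSubmodular E f) {T : Finset ι} {A : ι → Finset α} {y : ι → ℝ}
    (hy : ∀ t ∈ T, 0 ≤ y t) (hA : ∀ t ∈ T, A t ⊆ E) (hdisj : (T : Set ι).PairwiseDisjoint A)
    (hcut : ∀ S ⊆ T, ∑ t ∈ S, y t ≤ f (S.biUnion A)) :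
    ∃ x, MemPolymatroid E f x ∧ ∀ t ∈ T, ∑ a ∈ A t, x a = y t := by
  induction T using Finset.cons_induction generalizing E f with
  | empty => exact ⟨0, hf.memPolymatroid_zero, by simp⟩
  | cons t₀ T ht₀ ih =>
    have hT : T ⊆ cons t₀ T ht₀ := subset_cons ht₀
    have ht₀T : t₀ ∈ cons t₀ T ht₀ := mem_cons_self t₀ T
    have hAT : ∀ t ∈ T, A t ⊆ E := fun t ht => hA t (hT ht)
    have hcutT : ∀ S ⊆ T, ∑ t ∈ S, y t ≤ f (S.biUnion A) := fun S hS => hcut S (hS.trans hT)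
    have hΓ : A t₀ ⊆ E := hA t₀ ht₀T
    have hfirst : y t₀ ≤ residual f T A y (A t₀) := le_residual fun S hS => by
      have := hcut (cons t₀ S fun h => ht₀ (hS h)) (cons_subset_cons.2 hS)
      rw [sum_cons, cons_eq_insert, biUnion_insert] at this
      linarith
    obtain ⟨x₀, hx₀, hx₀Γ⟩ :=
      (hf.residual hAT hcutT hΓ).exists_memPolymatroid_sum_eq_of_le (hy t₀ ht₀T) hfirst
    have hx₀f : ∀ G ⊆ A t₀, ∑ a ∈ G, x₀ a ≤ f (G.biUnion singleton) := fun G hG => by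
      rw [biUnion_singleton_eq_self]
      exact (hx₀.sum_le G hG).trans (residual_le_self G)
    have hf' : IsMonoSubmodular (E \ A t₀) (residual f (A t₀) singleton x₀) :=
      hf.residual (fun a ha => singleton_subset_iff.2 (hΓ ha)) hx₀f sdiff_subset
    have hdisjΓ : ∀ t ∈ T, Disjoint (A t) (A t₀) := fun t ht =>
      hdisj (hT ht) ht₀T (ne_of_mem_of_not_mem ht ht₀)
    have hAΓ : ∀ t ∈ T, A t ⊆ E \ A t₀ := fun t ht => subset_sdiff.2 ⟨hAT t ht, hdisjΓ t ht⟩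
    have hcut' : ∀ S ⊆ T, ∑ t ∈ S, y t ≤ residual f (A t₀) singleton x₀ (S.biUnion A) :=
      fun S hS => le_residual fun G hG => by
        rw [biUnion_singleton_eq_self, union_comm]
        linarith [hx₀.sum_le G hG, residual_le (f := f) (A := A) (y := y) hS G]
    obtain ⟨x₁, hx₁, hx₁T⟩ :=
      ih hf' (fun t ht => hy t (hT ht)) hAΓ (hdisj.subset (coe_subset.2 hT)) hcut'
    refine ⟨x₀ + x₁, memPolymatroid_add_of_mem_residual hΓ hx₀.nonneg hx₀.eq_zero_of_notMem hx₁,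
      fun t ht => ?_⟩
    simp only [Pi.add_apply, sum_add_distrib]
    rcases mem_cons.1 ht with rfl | ht
    · rw [hx₀Γ, hx₁.sum_eq_zero_of_disjoint disjoint_sdiff, add_zero]
    · rw [hx₀.sum_eq_zero_of_disjoint (hdisjΓ t ht), hx₁T t ht, zero_add]

end Aggregation

section Market

variable {N M : Type*} [DecidableEq N] {E : Finset (N × M)}

lemma mem_Ei {i : N} {e : N × M} : e ∈ Ei E i ↔ e ∈ E ∧ e.1 = i := mem_filter

lemma Ei_subset (i : N) : Ei E i ⊆ E := filter_subset _ _

lemma EX_subset (X : Finset N) : EX E X ⊆ E := filter_subset _ _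

lemma disjoint_Ei {k l : N} (hkl : k ≠ l) : Disjoint (Ei E k) (Ei E l) :=
  disjoint_left.2 fun _ hk hl => hkl ((mem_Ei.1 hk).2.symm.trans (mem_Ei.1 hl).2)

lemma disjoint_EX_Ei {X : Finset N} {i : N} (hi : i ∉ X) : Disjoint (EX E X) (Ei E i) :=
  disjoint_left.2 fun _ hX hi' => hi ((mem_Ei.1 hi').2 ▸ (mem_filter.1 hX).2)

variable [DecidableEq M] {fj : M → Finset (N × M) → ℝ} {w x : N × M → ℝ} {d : N → ℝ}

lemma EX_eq_biUnion (X : Finset N) : EX E X = X.biUnion (Ei E) := by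
  ext e
  simp [EX, mem_Ei, and_comm]

lemma vsum_EX (x : N × M → ℝ) (X : Finset N) :
    vsum x (EX E X) = ∑ k ∈ X, vsum x (Ei E k) := by
  rw [EX_eq_biUnion, vsum, sum_biUnion fun _ _ _ _ => disjoint_Ei]
  rfl

lemma memPwd_zero (hw : memP E fj w) (hd : ∀ k, 0 ≤ d k) : memPwd E fj w d 0 :=
  ⟨fun _ => le_rfl, fun _ _ => rfl, by simpa using hw, fun k => by simpa [vsum] using hd k⟩

lemma memPwd_of_le (hw : ∀ e, 0 ≤ w e) {z : N × M → ℝ} (hz : memPwd E fj w d z)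
    (hx : ∀ e, 0 ≤ x e) (hxz : ∀ e, x e ≤ z e) : memPwd E fj w d x := by
  obtain ⟨-, hzE, ⟨-, hwzE, hwz⟩, hzd⟩ := hz
  have hxE : ∀ e ∉ E, x e = 0 := fun e he => le_antisymm (hzE e he ▸ hxz e) (hx e)
  refine ⟨hx, hxE, ⟨fun e => add_nonneg (hw e) (hx e), fun e he => ?_, fun j F hF => ?_⟩,
    fun k => (sum_le_sum fun e _ => hxz e).trans (hzd k)⟩
  · have := hwzE e he
    simp only [Pi.add_apply, hzE e he, hxE e he] at this ⊢
    exact this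
  · refine le_trans (sum_le_sum fun e _ => ?_) (hwz j F hF)
    simpa using hxz e

lemma fwd_le {F : Finset (N × M)} {c : ℝ} (hne : ∃ x, memPwd E fj w d x)
    (h : ∀ x, memPwd E fj w d x → vsum x F ≤ c) : fwd E fj w d F ≤ c :=
  csSup_le (hne.elim fun x hx => ⟨_, x, hx, rfl⟩) fun _ ⟨y, hy, hr⟩ => hr ▸ h y hy

variable [Fintype M]

lemma vsum_le_fTot (hw : memP E fj w) {F : Finset (N × M)} (hF : F ⊆ E) :
    vsum w F ≤ fTot E fj F := by
  rw [vsum, ← sum_fiberwise F Prod.snd]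
  refine sum_le_sum fun j _ => ?_
  have hFj : {e ∈ F | e.2 = j} = Ej E j ∩ F := by
    ext e
    simp only [mem_filter, mem_inter, Ej]
    exact ⟨fun h => ⟨⟨hF h.1, h.2⟩, h.1⟩, fun h => ⟨h.2, h.1.2⟩⟩
  rw [hFj]
  exact hw.2.2 j _ inter_subset_left

lemma fTot_empty (hfj : ∀ j, IsMonoSubmodular (Ej E j) (fj j)) : fTot E fj ∅ = 0 :=
  sum_eq_zero fun j _ => by rw [inter_empty]; exact (hfj j).1

lemma fTot_eq_of_subset_Ej (hfj : ∀ j, IsMonoSubmodular (Ej E j) (fj j)) {j : M}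
    {F : Finset (N × M)} (hF : F ⊆ Ej E j) : fTot E fj F = fj j F := by
  rw [fTot, sum_eq_single j _ (by simp), inter_eq_right.2 hF]
  intro j' _ hj'
  have : Ej E j' ∩ F = ∅ := eq_empty_of_forall_notMem fun e he =>
    hj' ((mem_filter.1 (mem_inter.1 he).1).2.symm.trans (mem_filter.1 (hF (mem_inter.1 he).2)).2)
  rw [this, (hfj j').1]

lemma fTot_submodular (hfj : ∀ j, IsMonoSubmodular (Ej E j) (fj j)) (F G : Finset (N × M)) :
    fTot E fj (F ∩ G) + fTot E fj (F ∪ G) ≤ fTot E fj F + fTot E fj G := by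
  simp only [fTot, ← sum_add_distrib]
  refine sum_le_sum fun j _ => ?_
  have h := (hfj j).submodular (inter_subset_left : Ej E j ∩ F ⊆ _)
    (inter_subset_left : Ej E j ∩ G ⊆ _)
  rwa [← inter_inter_distrib_left, ← inter_union_distrib_left] at h

lemma fwSet_finite (F : Finset (N × M)) :
    {r : ℝ | ∃ F', F ⊆ F' ∧ F' ⊆ E ∧ r = fTot E fj F' - vsum w F'}.Finite :=
  (E.powerset.image fun F' => fTot E fj F' - vsum w F').finite_toSet.subset
    fun _ ⟨F', _, hF', hr⟩ => mem_image.2 ⟨F', mem_powerset.2 hF', hr.symm⟩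

lemma fw_le {F F' : Finset (N × M)} (hFF' : F ⊆ F') (hF' : F' ⊆ E) :
    fw E fj w F ≤ fTot E fj F' - vsum w F' :=
  csInf_le (fwSet_finite F).bddBelow ⟨F', hFF', hF', rfl⟩

lemma le_fw {F : Finset (N × M)} (hF : F ⊆ E) {c : ℝ}
    (h : ∀ F', F ⊆ F' → F' ⊆ E → c ≤ fTot E fj F' - vsum w F') : c ≤ fw E fj w F :=
  le_csInf ⟨_, F, subset_rfl, hF, rfl⟩ fun _ ⟨F', hFF', hF', hr⟩ => hr ▸ h F' hFF' hF'

lemma exists_fw_eq {F : Finset (N × M)} (hF : F ⊆ E) :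
    ∃ F', F ⊆ F' ∧ F' ⊆ E ∧ fw E fj w F = fTot E fj F' - vsum w F' :=
  Set.Nonempty.csInf_mem (s := {r : ℝ | ∃ F', F ⊆ F' ∧ F' ⊆ E ∧ r = fTot E fj F' - vsum w F'})
    ⟨_, F, subset_rfl, hF, rfl⟩ (fwSet_finite F)

lemma fw_isMonoSubmodular (hfj : ∀ j, IsMonoSubmodular (Ej E j) (fj j)) (hw : memP E fj w) :
    IsMonoSubmodular E (fw E fj w) := by
  refine ⟨le_antisymm ?_ ?_, fun F G hFG hG => ?_, fun F G hF hG => ?_⟩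
  · simpa [fTot_empty hfj, vsum] using fw_le (fj := fj) (w := w) subset_rfl (empty_subset E)
  · exact le_fw (empty_subset E) fun F' _ hF' => sub_nonneg.2 (vsum_le_fTot hw hF')
  · obtain ⟨G', hGG', hG', hmin⟩ := exists_fw_eq (fj := fj) (w := w) hG
    exact hmin ▸ fw_le (hFG.trans hGG') hG'
  · obtain ⟨F', hFF', hF', hFmin⟩ := exists_fw_eq (fj := fj) (w := w) hF
    obtain ⟨G', hGG', hG', hGmin⟩ := exists_fw_eq (fj := fj) (w := w) hG
    have h₁ := fw_le (fj := fj) (w := w) (inter_subset_inter hFF' hGG')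
      (inter_subset_left.trans hF')
    have h₂ := fw_le (fj := fj) (w := w) (union_subset_union hFF' hGG') (union_subset hF' hG')
    have h₃ := fTot_submodular hfj F' G'
    have h₄ : vsum w (F' ∪ G') + vsum w (F' ∩ G') = vsum w F' + vsum w G' := sum_union_inter
    rw [hFmin, hGmin]
    linarith

lemma vsum_le_fw (hwx : memP E fj (w + x)) (hx : ∀ e, 0 ≤ x e) {F : Finset (N × M)}
    (hF : F ⊆ E) : vsum x F ≤ fw E fj w F :=
  le_fw hF fun F' hFF' hF' => by
    have h₁ : vsum x F ≤ vsum x F' := sum_le_sum_of_subset_of_nonneg hFF' fun e _ _ => hx e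
    have h₂ := vsum_le_fTot hwx hF'
    simp only [vsum, Pi.add_apply, sum_add_distrib] at h₁ h₂ ⊢
    linarith

lemma memP_add_of_memPolymatroid (hfj : ∀ j, IsMonoSubmodular (Ej E j) (fj j))
    (hw : memP E fj w) (hx : MemPolymatroid E (fw E fj w) x) : memP E fj (w + x) := by
  refine ⟨fun e => add_nonneg (hw.1 e) (hx.nonneg e),
    fun e he => by simp [hw.2.1 e he, hx.eq_zero_of_notMem e he], fun j F hF => ?_⟩
  have hFE : F ⊆ E := hF.trans (filter_subset _ _)
  have h₁ := hx.sum_le F hFE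
  have h₂ := fw_le (fj := fj) (w := w) subset_rfl hFE
  rw [fTot_eq_of_subset_Ej hfj hF] at h₂
  simp only [vsum, Pi.add_apply, sum_add_distrib] at h₂ ⊢
  linarith

lemma le_fwd (hx : memPwd E fj w d x) {F : Finset (N × M)} (hF : F ⊆ E) :
    vsum x F ≤ fwd E fj w d F :=
  le_csSup ⟨fw E fj w F, fun _ ⟨_, hy, hr⟩ => hr ▸ vsum_le_fw hy.2.2.1 hy.1 hF⟩ ⟨x, hx, rfl⟩

end Market

section Clinching

variable {N M : Type*} [DecidableEq N] [DecidableEq M] {E : Finset (N × M)}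
  {fj : M → Finset (N × M) → ℝ} {w : N × M → ℝ} {d : N → ℝ} {i : N} {ξ : N × M → ℝ}

lemma vsum_piecewise_Ei_of_ne (g x : N × M → ℝ) {k : N} (hk : k ≠ i) :
    vsum ((Ei E i).piecewise g x) (Ei E k) = vsum x (Ei E k) :=
  sum_congr rfl fun _ he => piecewise_eq_of_notMem _ _ _ (disjoint_left.1 (disjoint_Ei hk) he)

lemma update_mem_piWd_zero (hw : ∀ e, 0 ≤ w e) {x : N × M → ℝ} (hx : memPwd E fj w d x) :
    Function.update (fun k => vsum x (Ei E k)) i 0 ∈ PiWd E fj w d i 0 := by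
  set z := (Ei E i).piecewise (0 : N × M → ℝ) x
  have hz : ∀ e, 0 ≤ z e ∧ z e ≤ x e := fun e => by
    by_cases he : e ∈ Ei E i <;> simp [z, he, hx.1 e]
  refine ⟨by simp, fun k => ?_, z, memPwd_of_le hw hx (fun e => (hz e).1) (fun e => (hz e).2),
    fun e he => piecewise_eq_of_mem _ _ _ he, fun k hk => ?_⟩
  · rcases eq_or_ne k i with rfl | hk
    · simp
    · simpa [hk, vsum] using sum_nonneg fun e _ => hx.1 e
  · rw [vsum_piecewise_Ei_of_ne _ _ hk, Function.update_of_ne hk]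

lemma piWd_subset_piWd_zero (hw : ∀ e, 0 ≤ w e) : PiWd E fj w d i ξ ⊆ PiWd E fj w d i 0 := by
  rintro u ⟨hui, -, x, hx, -, hxu⟩
  convert update_mem_piWd_zero hw hx using 1
  funext k
  rcases eq_or_ne k i with rfl | hk
  · simp [hui]
  · simp [hk, hxu k hk]

lemma mem_clinchP_iff_piWd_zero_subset (hw : ∀ e, 0 ≤ w e) (hξ : ∀ e, 0 ≤ ξ e)
    (hξi : ∀ e ∉ Ei E i, ξ e = 0) :
    ξ ∈ ClinchP E fj w d i ↔ PiWd E fj w d i 0 ⊆ PiWd E fj w d i ξ :=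
  ⟨fun h => h.2.2.ge, fun h => ⟨hξ, hξi, (piWd_subset_piWd_zero hw).antisymm h⟩⟩

theorem exists_memPolymatroid_Ei_eq {f : Finset (N × M) → ℝ} (hf : IsMonoSubmodular E f)
    {K : Finset N} (hiK : i ∉ K) {u : N → ℝ} (hξ : ∀ e, 0 ≤ ξ e) (hu : ∀ k, 0 ≤ u k)
    (hcut : ∀ D ⊆ Ei E i, ∀ Y ⊆ K, vsum ξ D + ∑ k ∈ Y, u k ≤ f (EX E Y ∪ D)) :
    ∃ x, MemPolymatroid E f x ∧ (∀ e ∈ Ei E i, x e = ξ e) ∧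
      ∀ k ∈ K, vsum x (Ei E k) = u k := by
  set A : (N × M) ⊕ N → Finset (N × M) := Sum.elim singleton (Ei E)
  have hA : ∀ t ∈ (Ei E i).disjSum K, A t ⊆ E := by
    rintro (e | k) ht
    · simpa [A] using Ei_subset i (inl_mem_disjSum.1 ht)
    · exact Ei_subset k
  have hdisj : ((Ei E i).disjSum K : Set ((N × M) ⊕ N)).PairwiseDisjoint A := by
    have hEi : ∀ e ∈ Ei E i, ∀ k ∈ K, Disjoint {e} (Ei E k) := fun e he k hk =>
      disjoint_singleton_left.2
        (disjoint_left.1 (disjoint_Ei (ne_of_mem_of_not_mem hk hiK).symm) he)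
    rintro (e | k) he (e' | k') he' hne <;>
      simp only [mem_coe, inl_mem_disjSum, inr_mem_disjSum] at he he'
    · simpa [A, Function.onFun] using hne
    · exact hEi e he k' he'
    · exact (hEi e' he' k he).symm
    · exact disjoint_Ei fun h => hne (h ▸ rfl)
  have hcutT : ∀ S ⊆ (Ei E i).disjSum K, ∑ t ∈ S, Sum.elim ξ u t ≤ f (S.biUnion A) := by
    intro S hS
    have hSA : S.biUnion A = EX E S.toRight ∪ S.toLeft := by
      ext e
      simp [A, EX_eq_biUnion, or_comm]
    rw [sum_sum_eq_sum_toLeft_add_sum_toRight, hSA]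
    exact hcut _ (subset_disjSum.1 hS).1 _ (subset_disjSum.1 hS).2
  obtain ⟨x, hx, hxT⟩ := exists_memPolymatroid_sum_parts_eq hf
    (by rintro (e | k) - <;> simp [hξ, hu]) hA hdisj hcutT
  exact ⟨x, hx, fun e he => by simpa [A] using hxT (.inl e) (inl_mem_disjSum.2 he),
    fun k hk => by simpa [A, vsum] using hxT (.inr k) (inr_mem_disjSum.2 hk)⟩

variable [Fintype M]

lemma vsum_le_fwd_sub_of_piWd_zero_subset (hw : memP E fj w) (hd : ∀ k, 0 ≤ d k)
    (h : PiWd E fj w d i 0 ⊆ PiWd E fj w d i ξ) {F : Finset (N × M)} (hF : F ⊆ Ei E i)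
    {X : Finset N} (hiX : i ∉ X) :
    vsum ξ F ≤ fwd E fj w d (EX E X ∪ F) - fwd E fj w d (EX E X) := by
  rw [le_sub_comm]
  refine fwd_le ⟨0, memPwd_zero hw hd⟩ fun x hx => ?_
  obtain ⟨-, -, x', hx', hx'ξ, hx'x⟩ := h (update_mem_piWd_zero hw.1 hx)
  have hX : vsum x' (EX E X) = vsum x (EX E X) := by
    rw [vsum_EX, vsum_EX]
    refine sum_congr rfl fun k hk => ?_
    have hki : k ≠ i := ne_of_mem_of_not_mem hk hiX
    rw [hx'x k hki, Function.update_of_ne hki]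
  have hξF : vsum x' F = vsum ξ F := sum_congr rfl fun e he => hx'ξ e (hF he)
  have hle := le_fwd hx' (union_subset (EX_subset X) (hF.trans (Ei_subset i)))
  rw [vsum, sum_union (disjoint_of_subset_right hF (disjoint_EX_Ei hiX))] at hle
  change vsum x' (EX E X) + vsum x' F ≤ _ at hle
  linarith

theorem piWd_zero_subset_piWd [Fintype N] (hfj : ∀ j, IsMonoSubmodular (Ej E j) (fj j))
    (hw : memP E fj w) (hξ : ∀ e, 0 ≤ ξ e)
    (hcut : ∀ F ⊆ Ei E i, ∀ X ⊆ univ.erase i,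
      vsum ξ F ≤ fwd E fj w d (EX E X ∪ F) - fwd E fj w d (EX E X)) :
    PiWd E fj w d i 0 ⊆ PiWd E fj w d i ξ := by
  rintro u ⟨hui, hu, x₀, hx₀, -, hx₀u⟩
  have hne : ∃ x, memPwd E fj w d x := ⟨x₀, hx₀⟩
  have hfwd : ∀ F ⊆ E, fwd E fj w d F ≤ fw E fj w F := fun F hF =>
    fwd_le hne fun x hx => vsum_le_fw hx.2.2.1 hx.1 hF
  have hloads : ∀ Y ⊆ univ.erase i, ∑ k ∈ Y, u k = vsum x₀ (EX E Y) := fun Y hY => by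
    rw [vsum_EX]
    exact sum_congr rfl fun k hk => (hx₀u k (ne_of_mem_erase (hY hk))).symm
  obtain ⟨x, hx, hxξ, hxu⟩ := exists_memPolymatroid_Ei_eq (fw_isMonoSubmodular hfj hw)
    (notMem_erase i univ) hξ hu fun D hD Y hY => by
      have h₁ := le_fwd hx₀ (EX_subset Y)
      have h₂ := hcut D hD Y hY
      have h₃ := hfwd _ (union_subset (EX_subset Y) (hD.trans (Ei_subset i)))
      rw [hloads Y hY]
      linarith
  have hξd : vsum ξ (Ei E i) ≤ d i := by
    have h₁ := hcut (Ei E i) subset_rfl ∅ (empty_subset _)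
    rw [show EX E ∅ = ∅ by simp [EX], empty_union] at h₁
    have h₂ := le_fwd hx₀ (empty_subset E)
    have h₃ : fwd E fj w d (Ei E i) ≤ d i := fwd_le hne fun x hx => hx.2.2.2 i
    simp only [vsum, sum_empty] at h₁ h₂ ⊢
    linarith
  refine ⟨hui, hu, x, ⟨hx.nonneg, hx.eq_zero_of_notMem, memP_add_of_memPolymatroid hfj hw hx,
    fun k => ?_⟩, hxξ, fun k hk => hxu k (mem_erase.2 ⟨hk, mem_univ k⟩)⟩
  rcases eq_or_ne k i with rfl | hk
  · exact (sum_congr rfl hxξ).trans_le hξd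
  · rw [hxu k (mem_erase.2 ⟨hk, mem_univ k⟩), ← hx₀u k hk]
    exact hx₀.2.2.2 k

end Clinching

/-- `ξ` belongs to the clinching polytope `P^i_{w,d}` iff
`ξ(F) ≤ f_{w,d}(E_X ∪ F) - f_{w,d}(E_X)` for all `F ⊆ E_i` and `X ⊆ N - i`. -/
theorem mem_clinchP_iff
    (E : Finset (B × S)) (fj : S → Finset (B × S) → ℝ)
    (hfj : ∀ j : S, IsMonoSubmodular (Ej E j) (fj j))
    (w : B × S → ℝ) (hw : memP E fj w)
    (d : B → ℝ) (hd : ∀ i : B, 0 ≤ d i)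
    (i : B) (ξ : B × S → ℝ) (hξ0 : ∀ e, 0 ≤ ξ e) (hξs : ∀ e ∉ Ei E i, ξ e = 0) :
    ξ ∈ ClinchP E fj w d i ↔
      ∀ F ⊆ Ei E i, ∀ X ⊆ Finset.univ.erase i,
        vsum ξ F ≤ fwd E fj w d (EX E X ∪ F) - fwd E fj w d (EX E X) := by
  rw [mem_clinchP_iff_piWd_zero_subset hw.1 hξ0 hξs]
  exact ⟨fun h F hF X hX => vsum_le_fwd_sub_of_piWd_zero_subset hw hd h hF
      fun hi => notMem_erase i univ (hX hi),
    piWd_zero_subset_piWd hfj hw hξ0⟩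

end TwoSidedMarket
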